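/- arXiv:2407.18896 — 5 statements merged into one kernel-verified Lean document; each statement's English description precedes it below -/
import Mathlib

section
/- Let A ∈ 𝔸 and B ∈ 𝔹, and suppose that the matrices M_1, …, M_C all have full column rank, where M_1 = [A_2ᵀ ⋯ A_Cᵀ]ᵀ (the matrix A with the rows belonging to channel 1 deleted) and, for c = 2, …, C, M_c is the block matrix [[A_{<c}, B_{<c}], [A_{>c}, 0]] with A_{<c} = [A_1ᵀ ⋯ A_{c−1}ᵀ]ᵀ the rows of A in channels 1,…,c−1, A_{>c} = [A_{c+1}ᵀ ⋯ A_Cᵀ]ᵀ the rows of A in channels c+1,…,C, and B_{<c} = blkdiag(B_1, …, B_{c−1}). Then every orthogonal matrix Q ∈ O(r_0 + r) such that [A B]Q = [Ã B̃] for some Ã ∈ 𝔸 and B̃ ∈ 𝔹 is block diagonal: writing Q in blocks Q_{ij} of size r_i × r_j for 0 ≤ i, j ≤ C (index 0 corresponding to the first r_0 rows/columns, index c to the next r_c), one has Q_{ij} = 0 for all i ≠ j. -/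
/-!
Order the factor blocks as common < channel 1 < ⋯ < channel C. Column `(c, x)` of
`[A B] Q = [Ã B̃]` vanishes on every row outside channel `c`. Once `Q` is known not to mix the
blocks above `c`, these rows of `[A B] Q` only see the part of the column lying in the blocks
below `c`, through `M_c`; full column rank of `M_c` kills that part, so `Q` maps block `c` into
itself. An orthogonal matrix that maps a coordinate block into itself does not mix it with the
complementary block in the other direction either, which feeds the downward induction on `c` and
gives the rows of the common block at the end.
-/

open Matrix

/-- The matrix `M_c` of Proposition 1: the rows of `[A B]` belonging to all channels other
than `c`, keeping the common-factor columns and the distinct-factor columns of the channels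
preceding `c`.  (Since `blockDiagonal' B` vanishes on rows of channels `> c` at columns of
channels `< c`, this agrees with `[[A_{<c}, B_{<c}], [A_{>c}, 0]]`, and for the first channel
it is `[A₂ᵀ ⋯ A_Cᵀ]ᵀ`.) -/
def Mmat {C : ℕ} (n r : Fin C → ℕ) (r0 : ℕ)
    (A : Matrix ((c : Fin C) × Fin (n c)) (Fin r0) ℝ)
    (B : ∀ c, Matrix (Fin (n c)) (Fin (r c)) ℝ) (c : Fin C) :
    Matrix {i : (c' : Fin C) × Fin (n c') // i.1 ≠ c}
      (Fin r0 ⊕ {j : (c' : Fin C) × Fin (r c') // j.1 < c}) ℝ :=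
  Matrix.of fun i k =>
    Sum.elim (fun k0 => A i.1 k0) (fun j => Matrix.blockDiagonal' B i.1 j.1) k

/-- A matrix has full column rank iff its rank equals the number of columns. -/
def FCR {m l : Type*} [Fintype m] [Fintype l] (M : Matrix m l ℝ) : Prop :=
  M.rank = Fintype.card l

lemma FCR.mulVec_injective {m l : Type*} [Fintype m] [Fintype l] {M : Matrix m l ℝ}
    (h : FCR M) : Function.Injective M.mulVec :=
  Matrix.mulVec_injective_iff.mpr <| linearIndependent_iff_card_eq_finrank_span.mpr <| by
    rw [← h, rank_eq_finrank_span_cols]; rfl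

namespace Matrix

variable {ι : Type*} [Fintype ι] [DecidableEq ι] {Q : Matrix ι ι ℝ}

lemma sum_sq_row_eq_one (hQ : Qᵀ * Q = 1) (i : ι) : ∑ j, Q i j ^ 2 = 1 := by
  have hQ' : Q * Qᵀ = 1 := mul_eq_one_comm.mp hQ
  simpa [mul_apply, sq] using congrFun (congrFun hQ' i) i

lemma sum_sq_col_eq_one (hQ : Qᵀ * Q = 1) (j : ι) : ∑ i, Q i j ^ 2 = 1 := by
  simpa [mul_apply, sq] using congrFun (congrFun hQ j) j

open Finset in
/-- The rows and the columns indexed by `p` both have total squared mass `#{p}`; the columns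
carry all of theirs inside the `p × p` block, so the rows have none left outside it. -/
lemma orthogonal_apply_eq_zero_of_invariant (hQ : Qᵀ * Q = 1) (p : ι → Prop) [DecidablePred p]
    (hp : ∀ i j, ¬ p i → p j → Q i j = 0) {i j : ι} (hi : p i) (hj : ¬ p j) :
    Q i j = 0 := by
  set s := univ.filter p
  have hcols : ∑ i ∈ s, ∑ j ∈ s, Q i j ^ 2 = #s := by
    rw [sum_comm, card_eq_sum_ones, Nat.cast_sum]
    refine sum_congr rfl fun j hj => ?_
    rw [Nat.cast_one, ← sum_sq_col_eq_one hQ j]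
    refine sum_subset (subset_univ s) fun i _ hi => ?_
    rw [hp i j (by simpa [s] using hi) (by simpa [s] using hj), sq, zero_mul]
  have hrows : ∑ i ∈ s, ∑ j, Q i j ^ 2 = #s := by
    simp [sum_sq_row_eq_one hQ]
  have hout : ∑ i ∈ s, ∑ j ∈ sᶜ, Q i j ^ 2 = 0 := by
    simp_rw [← sum_add_sum_compl s, sum_add_distrib] at hrows
    linarith
  have hi' : ∑ j ∈ sᶜ, Q i j ^ 2 = 0 :=
    (sum_eq_zero_iff_of_nonneg fun i _ => sum_nonneg fun j _ => sq_nonneg _).mp hout i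
      (by simpa [s] using hi)
  exact pow_eq_zero_iff two_ne_zero |>.mp <|
    (sum_eq_zero_iff_of_nonneg fun j _ => sq_nonneg _).mp hi' j (by simpa [s] using hj)

end Matrix

section Channels

variable {C : ℕ} {n r : Fin C → ℕ} {r0 : ℕ}

/-- The columns of `Mmat … c` are the factor indices `k` with `factorBlock k < c`, embedded by
`Sum.map id Subtype.val`. -/
def factorBlock : Fin r0 ⊕ ((c : Fin C) × Fin (r c)) → WithBot (Fin C) :=
  Sum.elim (fun _ => ⊥) (fun j => j.1)

lemma Mmat_mulVec_comp {A : Matrix ((c : Fin C) × Fin (n c)) (Fin r0) ℝ}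
    {B : ∀ c, Matrix (Fin (n c)) (Fin (r c)) ℝ} {c : Fin C}
    {q : Fin r0 ⊕ ((c : Fin C) × Fin (r c)) → ℝ} (hq : ∀ j, c < j.1 → q (Sum.inr j) = 0)
    (i : {i : (c' : Fin C) × Fin (n c') // i.1 ≠ c}) :
    (Mmat n r r0 A B c *ᵥ (q ∘ Sum.map id Subtype.val)) i
      = (fromCols A (blockDiagonal' B) *ᵥ q) i.1 := by
  simp only [mulVec, dotProduct, Fintype.sum_sum_type, Mmat, of_apply, Sum.elim_inl,
    Sum.elim_inr, Function.comp_apply, Sum.map_inl, Sum.map_inr, id, fromCols_apply_inl,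
    fromCols_apply_inr]
  congr 1
  refine Fintype.sum_of_injective Subtype.val Subtype.val_injective _ _ (fun j hj => ?_)
    fun _ => rfl
  have hcj : ¬ j.1 < c := fun h => hj ⟨⟨j, h⟩, rfl⟩
  by_cases hij : i.1.1 = j.1
  · rw [hq j (lt_of_le_of_ne (not_lt.mp hcj) (hij ▸ i.2).symm), mul_zero]
  · rw [blockDiagonal'_apply_ne B _ _ hij, zero_mul]

lemma eq_zero_of_fromCols_mulVec_eq_zero_off_channel
    {A : Matrix ((c : Fin C) × Fin (n c)) (Fin r0) ℝ}
    {B : ∀ c, Matrix (Fin (n c)) (Fin (r c)) ℝ} {c : Fin C} (hFCR : FCR (Mmat n r r0 A B c))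
    {q : Fin r0 ⊕ ((c : Fin C) × Fin (r c)) → ℝ} (hq : ∀ j, c < j.1 → q (Sum.inr j) = 0)
    (hAq : ∀ i : (c : Fin C) × Fin (n c), i.1 ≠ c →
      (fromCols A (blockDiagonal' B) *ᵥ q) i = 0)
    {k : Fin r0 ⊕ ((c : Fin C) × Fin (r c))} (hk : factorBlock k < c) : q k = 0 := by
  have hv : q ∘ Sum.map id Subtype.val = 0 := hFCR.mulVec_injective <| by
    ext i
    rw [mulVec_zero, Mmat_mulVec_comp hq, hAq i.1 i.2, Pi.zero_apply]
  rcases k with k | j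
  · exact congrFun hv (Sum.inl k)
  · exact congrFun hv (Sum.inr ⟨j, WithBot.coe_lt_coe.mp hk⟩)

variable {A Atil : Matrix ((c : Fin C) × Fin (n c)) (Fin r0) ℝ}
  {B Btil : ∀ c, Matrix (Fin (n c)) (Fin (r c)) ℝ}
  {Q : Matrix (Fin r0 ⊕ ((c : Fin C) × Fin (r c))) (Fin r0 ⊕ ((c : Fin C) × Fin (r c))) ℝ}

lemma apply_eq_zero_of_factorBlock_eq_coe_of_above {c : Fin C} (hFCR : FCR (Mmat n r r0 A B c))
    (hEq : fromCols A (blockDiagonal' B) * Q = fromCols Atil (blockDiagonal' Btil))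
    (habove : ∀ b, (c : WithBot (Fin C)) < b →
      ∀ i j, factorBlock i = b → factorBlock j ≠ b → Q i j = 0)
    {i j : Fin r0 ⊕ ((c : Fin C) × Fin (r c))} (hi : factorBlock i ≠ c)
    (hj : factorBlock j = c) : Q i j = 0 := by
  obtain ⟨x, rfl⟩ : ∃ x, j = Sum.inr ⟨c, x⟩ := by
    rcases j with _ | ⟨c', x⟩
    · exact absurd hj WithBot.bot_ne_coe
    · obtain rfl : c' = c := WithBot.coe_injective hj
      exact ⟨x, rfl⟩
  have hq : ∀ j, c < j.1 → Q (Sum.inr j) (Sum.inr ⟨c, x⟩) = 0 := fun j hcj =>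
    habove j.1 (WithBot.coe_lt_coe.mpr hcj) _ _ rfl (WithBot.coe_injective.ne hcj.ne)
  have hAq : ∀ i : (c : Fin C) × Fin (n c), i.1 ≠ c →
      (fromCols A (blockDiagonal' B) *ᵥ fun k => Q k (Sum.inr ⟨c, x⟩)) i = 0 := by
    intro i hic
    have := congrFun (congrFun hEq i) (Sum.inr ⟨c, x⟩)
    rwa [fromCols_apply_inr, blockDiagonal'_apply_ne _ _ _ hic] at this
  rcases lt_or_gt_of_ne hi with hlt | hgt
  · exact eq_zero_of_fromCols_mulVec_eq_zero_off_channel hFCR hq hAq hlt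
  · exact habove _ hgt _ _ rfl (hj.trans_ne hgt.ne)

lemma apply_eq_zero_of_factorBlock_eq_coe (hFCR : ∀ c, FCR (Mmat n r r0 A B c))
    (hQ : Qᵀ * Q = 1)
    (hEq : fromCols A (blockDiagonal' B) * Q = fromCols Atil (blockDiagonal' Btil))
    (c : Fin C) {i j : Fin r0 ⊕ ((c : Fin C) × Fin (r c))} (hi : factorBlock i ≠ c)
    (hj : factorBlock j = c) : Q i j = 0 := by
  induction c using WellFoundedGT.induction generalizing i j with
  | ind c ih =>
    refine apply_eq_zero_of_factorBlock_eq_coe_of_above (hFCR c) hEq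
      (fun b hb i j hi hj => ?_) hi hj
    obtain ⟨c', rfl⟩ := WithBot.ne_bot_iff_exists.mp (WithBot.bot_lt_coe c |>.trans hb).ne'
    exact orthogonal_apply_eq_zero_of_invariant hQ (factorBlock · = c')
      (fun _ _ => ih c' (WithBot.coe_lt_coe.mp hb)) hi hj

lemma apply_eq_zero_of_factorBlock_ne (hFCR : ∀ c, FCR (Mmat n r r0 A B c))
    (hQ : Qᵀ * Q = 1)
    (hEq : fromCols A (blockDiagonal' B) * Q = fromCols Atil (blockDiagonal' Btil))
    {i j : Fin r0 ⊕ ((c : Fin C) × Fin (r c))} (hij : factorBlock i ≠ factorBlock j) :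
    Q i j = 0 := by
  cases hj : factorBlock j with
  | coe c => exact apply_eq_zero_of_factorBlock_eq_coe hFCR hQ hEq c (hj ▸ hij) hj
  | bot =>
    obtain ⟨c, hi⟩ := WithBot.ne_bot_iff_exists.mp (hj ▸ hij)
    exact orthogonal_apply_eq_zero_of_invariant hQ (factorBlock · = c)
      (fun _ _ => apply_eq_zero_of_factorBlock_eq_coe hFCR hQ hEq c) hi.symm
      (hj ▸ WithBot.bot_ne_coe)

end Channels

/-- **Proposition 1.** If the matrices `M₁, …, M_C` all have full column rank, then every
orthogonal matrix `Q` with `[A B] Q = [Ã B̃]` for some `Ã ∈ 𝔸`, `B̃ ∈ 𝔹` is block diagonal. -/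
theorem orthogonal_preserving_blockdiag {C : ℕ} (n r : Fin C → ℕ) (r0 : ℕ)
    (A : Matrix ((c : Fin C) × Fin (n c)) (Fin r0) ℝ)
    (B : ∀ c, Matrix (Fin (n c)) (Fin (r c)) ℝ)
    (hFCR : ∀ c : Fin C, FCR (Mmat n r r0 A B c))
    (Q : Matrix (Fin r0 ⊕ ((c : Fin C) × Fin (r c)))
                (Fin r0 ⊕ ((c : Fin C) × Fin (r c))) ℝ)
    (hQ : Qᵀ * Q = 1)
    (Atil : Matrix ((c : Fin C) × Fin (n c)) (Fin r0) ℝ)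
    (Btil : ∀ c, Matrix (Fin (n c)) (Fin (r c)) ℝ)
    (hEq : Matrix.fromCols A (Matrix.blockDiagonal' B) * Q
        = Matrix.fromCols Atil (Matrix.blockDiagonal' Btil)) :
    (∀ (k : Fin r0) (j : (c : Fin C) × Fin (r c)),
        Q (Sum.inl k) (Sum.inr j) = 0 ∧ Q (Sum.inr j) (Sum.inl k) = 0) ∧
    (∀ j j' : (c : Fin C) × Fin (r c), j.1 ≠ j'.1 → Q (Sum.inr j) (Sum.inr j') = 0) := by
  refine ⟨fun k j => ⟨?_, ?_⟩, fun j j' hjj' => ?_⟩ <;>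
    refine apply_eq_zero_of_factorBlock_ne hFCR hQ hEq ?_
  · exact WithBot.bot_ne_coe
  · exact WithBot.coe_ne_bot
  · exact WithBot.coe_injective.ne hjj'
end

section
/- Suppose there exist A ∈ 𝔸_L, B ∈ 𝔹_L such that the linear map F_{A,B} : 𝔸_L × 𝔹_L × Diag(n) → Sym(n), F_{A,B}(dA, dB, dΦ) = A·dAᵀ + dA·Aᵀ + B·dBᵀ + dB·Bᵀ + dΦ, is injective. Then Condition 4 holds: r_0 ≤ (2n + 1 − √(8(n + D) + 1))/2 where D = Σ_{c=1}^C [n_c·r_c − r_c(r_c−1)/2], and r_c ≤ (2n_c + 1 − √(8n_c + 1))/2 for every c = 1,…,C (inequalities in ℝ, with natural numbers cast to reals). -/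
/-!
`F_{A,B}` is linear and takes values in symmetric matrices, which are determined by their
lower triangle, so injectivity forces `dim 𝔸_L + dim 𝔹_L + n ≤ n(n+1)/2`, i.e.
`n r₀ − r₀(r₀−1)/2 + D + n ≤ n(n+1)/2`. This is a quadratic inequality in `r₀` whose
smaller root is the bound of Condition 4, and `r₀ ≤ n` excludes the larger branch.
For a single channel `c`, perturbations `(0, dB, dΦ)` supported on `c` are sent to the
block-diagonal matrix whose only nonzero block is `B_c dB_cᵀ + dB_c B_cᵀ + dΦ_c`; so this
single-channel map is injective as well, and the same count in `Sym(n_c)` with `D = 0`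
bounds `r_c`.
-/

open Matrix MeasureTheory

/-- The order-preserving identification of `Fin (∑ c, n c)` with the lexicographically ordered
disjoint union of the channels. -/
noncomputable def chanIdx {C : ℕ} (n : Fin C → ℕ) :
    Fin (∑ c, n c) ≃ ((c : Fin C) × Fin (n c)) :=
  (Fintype.orderIsoFinOfCardEq (Σₗ c : Fin C, Fin (n c))
    (by simp [Fintype.card_sigma])).toEquiv.trans ofLex

/-- The block-diagonal matrix `blkdiag(B₁, …, B_C)`, with rows and columns stacked
channel-by-channel. -/
noncomputable def blkdiag {C : ℕ} (n r : Fin C → ℕ)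
    (B : ∀ c, Matrix (Fin (n c)) (Fin (r c)) ℝ) :
    Matrix (Fin (∑ c, n c)) (Fin (∑ c, r c)) ℝ :=
  (Matrix.blockDiagonal' B).submatrix (chanIdx n) (chanIdx r)

/-- Index set of the free entries of an `N × r₀` loading matrix whose top `r₀ × r₀` block is
constrained to be lower triangular (the entry `(i, j)` is constrained to vanish exactly when
`i < r₀` and `i < j`). -/
def FreeIdx (N r0 : ℕ) : Type :=
  {p : Fin N × Fin r0 // (p.2 : ℕ) ≤ (p.1 : ℕ) ∨ r0 ≤ (p.1 : ℕ)}

instance (N r0 : ℕ) : Fintype (FreeIdx N r0) := by unfold FreeIdx; infer_instance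

/-- Builds a loading matrix with lower-triangular top block from its free entries. -/
def toMat {N r0 : ℕ} (a : FreeIdx N r0 → ℝ) : Matrix (Fin N) (Fin r0) ℝ :=
  Matrix.of fun i j =>
    if h : (j : ℕ) ≤ (i : ℕ) ∨ r0 ≤ (i : ℕ) then a ⟨(i, j), h⟩ else 0

/-- The lower-triangular-top-block property defining `𝔸_L` (and, per channel, `𝔹_L`). -/
def IsLT {N r0 : ℕ} (h : r0 ≤ N) (A : Matrix (Fin N) (Fin r0) ℝ) : Prop :=
  ∀ i j : Fin r0, i < j → A (Fin.castLE h i) j = 0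

/-- The starred property defining `𝔸*_L` (and, per channel, `𝔹*_L`). -/
def IsLTStar {N r0 : ℕ} (h : r0 ≤ N) (A : Matrix (Fin N) (Fin r0) ℝ) : Prop :=
  IsLT h A ∧ ∀ j : Fin r0,
    0 < A (Fin.castLE h j) j ∨ ∀ i : Fin r0, A (Fin.castLE h i) j = 0

/-- The differential map `F_{A,B}(dA, dB, dΦ) = A dAᵀ + dA Aᵀ + B dBᵀ + dB Bᵀ + dΦ`, with
domain `𝔸_L × 𝔹_L × Diag(n)` in its free-entry parameterization. -/
noncomputable def Fdiff {C : ℕ} (n r : Fin C → ℕ) (r0 : ℕ)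
    (A : Matrix (Fin (∑ c, n c)) (Fin r0) ℝ)
    (B : ∀ c, Matrix (Fin (n c)) (Fin (r c)) ℝ)
    (e : (FreeIdx (∑ c, n c) r0 → ℝ) × ((c : Fin C) → FreeIdx (n c) (r c) → ℝ)
          × (Fin (∑ c, n c) → ℝ)) :
    Matrix (Fin (∑ c, n c)) (Fin (∑ c, n c)) ℝ :=
  A * (toMat e.1)ᵀ + toMat e.1 * Aᵀ
    + blkdiag n r B * (blkdiag n r fun c => toMat (e.2.1 c))ᵀ
    + (blkdiag n r fun c => toMat (e.2.1 c)) * (blkdiag n r B)ᵀ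
    + Matrix.diagonal e.2.2

/-- `D = Σ_c [n_c r_c − r_c (r_c − 1)/2]`, as a real number. -/
noncomputable def Dcount {C : ℕ} (n r : Fin C → ℕ) : ℝ :=
  ∑ c, ((n c : ℝ) * (r c : ℝ) - (r c : ℝ) * ((r c : ℝ) - 1) / 2)

section Counting

open Finset

theorem card_freeIdx_add_choose_two {N k : ℕ} (hk : k ≤ N) :
    Fintype.card (FreeIdx N k) + k.choose 2 = N * k := by
  have hfree : Fintype.card (FreeIdx N k)
      = #{p : Fin N × Fin k | (p.2 : ℕ) ≤ p.1 ∨ k ≤ p.1} :=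
    Fintype.card_of_subtype _ (by simp)
  have hupper : #{p : Fin N × Fin k | ¬((p.2 : ℕ) ≤ p.1 ∨ k ≤ p.1)}
      = #{x : Fin k × Fin k | x.1 < x.2} := by
    symm
    refine Finset.card_bij (fun x _ => (Fin.castLE hk x.1, x.2)) ?_ ?_ ?_
    · intro x hx
      simp only [Finset.mem_filter, Finset.mem_univ, true_and, Fin.val_castLE] at hx ⊢
      omega
    · intro x _ y _ h
      simp only [Prod.mk.injEq, Fin.castLE_inj] at h
      exact Prod.ext h.1 h.2
    · intro p hp
      simp only [Finset.mem_filter, Finset.mem_univ, true_and] at hp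
      refine ⟨(⟨p.1, by omega⟩, p.2), ?_, rfl⟩
      simp only [Finset.mem_filter, Finset.mem_univ, true_and, Fin.lt_def]
      omega
  have hlt : #{x : Fin k × Fin k | x.1 < x.2} = k.choose 2 := by
    simpa using Fintype.card_product_filter_lt (α := Fin k)
  rw [hfree, ← hlt, ← hupper,
    Finset.card_filter_add_card_filter_not, Finset.card_univ, Fintype.card_prod,
    Fintype.card_fin, Fintype.card_fin]

theorem card_freeIdx_eq {N k : ℕ} (hk : k ≤ N) :
    (Fintype.card (FreeIdx N k) : ℝ) = N * k - k * (k - 1) / 2 := by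
  rw [← Nat.cast_choose_two, eq_sub_iff_add_eq]
  exact_mod_cast card_freeIdx_add_choose_two hk

theorem le_half_sub_sqrt_of_dim_le {x m D : ℝ} (hxm : x ≤ m)
    (h : m * x - x * (x - 1) / 2 + D + m ≤ m * m - m * (m - 1) / 2) :
    x ≤ (2 * m + 1 - √(8 * (m + D) + 1)) / 2 := by
  have hsq : 8 * (m + D) + 1 ≤ (2 * m + 1 - 2 * x) ^ 2 := by nlinarith
  have := Real.sqrt_le_sqrt hsq
  rw [Real.sqrt_sq (by linarith)] at this
  linarith

end Counting

theorem finrank_le_card_freeIdx_of_injective {V : Type*} [AddCommGroup V] [Module ℝ V]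
    [FiniteDimensional ℝ V] {N : ℕ} (f : V →ₗ[ℝ] Matrix (Fin N) (Fin N) ℝ)
    (hf : Function.Injective f) (hsymm : ∀ v, (f v)ᵀ = f v) :
    Module.finrank ℝ V ≤ Fintype.card (FreeIdx N N) := by
  let lower : Matrix (Fin N) (Fin N) ℝ →ₗ[ℝ] (FreeIdx N N → ℝ) :=
    LinearMap.pi fun p => entryLinearMap ℝ ℝ p.1.1 p.1.2
  have hinj : Function.Injective (lower ∘ₗ f) := by
    intro v w hvw
    apply hf
    ext i j
    rcases le_total (j : ℕ) i with hji | hij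
    · exact congrFun hvw ⟨(i, j), .inl hji⟩
    · rw [← hsymm v, ← hsymm w]
      exact congrFun hvw ⟨(j, i), .inl hij⟩
  simpa using LinearMap.finrank_le_finrank_of_injective hinj

section Differential

variable {N k : ℕ}

theorem toMat_add (a b : FreeIdx N k → ℝ) : toMat (a + b) = toMat a + toMat b := by
  ext i j
  simp only [toMat, Matrix.of_apply, Matrix.add_apply]
  split_ifs
  · rfl
  · simp

theorem toMat_smul (t : ℝ) (a : FreeIdx N k → ℝ) : toMat (t • a) = t • toMat a := by
  ext i j
  simp only [toMat, Matrix.of_apply, Matrix.smul_apply]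
  split_ifs
  · rfl
  · simp

@[simp]
theorem toMat_zero : toMat (0 : FreeIdx N k → ℝ) = 0 := by
  simpa using toMat_smul 0 (0 : FreeIdx N k → ℝ)

noncomputable def loadingDiff (M : Matrix (Fin N) (Fin k) ℝ) :
    (FreeIdx N k → ℝ) × (Fin N → ℝ) →ₗ[ℝ] Matrix (Fin N) (Fin N) ℝ where
  toFun x := M * (toMat x.1)ᵀ + toMat x.1 * Mᵀ + diagonal x.2
  map_add' x y := by
    have hdiag : diagonal (x.2 + y.2) = diagonal x.2 + diagonal y.2 := (diagonal_add _ _).symm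
    simp only [Prod.fst_add, Prod.snd_add, toMat_add, transpose_add, Matrix.mul_add,
      Matrix.add_mul, hdiag]
    abel
  map_smul' t x := by
    simp only [Prod.smul_fst, Prod.smul_snd, toMat_smul, transpose_smul, Matrix.mul_smul,
      Matrix.smul_mul, diagonal_smul, smul_add, RingHom.id_apply]

theorem loadingDiff_transpose (M : Matrix (Fin N) (Fin k) ℝ) (x) :
    (loadingDiff M x)ᵀ = loadingDiff M x := by
  simp only [loadingDiff, LinearMap.coe_mk, AddHom.coe_mk, transpose_add, transpose_mul,
    transpose_transpose, diagonal_transpose]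
  abel

end Differential

section BlockDiagonal

variable {C : ℕ} (n r : Fin C → ℕ)

theorem blkdiag_add (P Q : ∀ c, Matrix (Fin (n c)) (Fin (r c)) ℝ) :
    blkdiag n r (fun c => P c + Q c) = blkdiag n r P + blkdiag n r Q := by
  rw [blkdiag, blkdiag, blkdiag, ← Pi.add_def, blockDiagonal'_add, submatrix_add]
  rfl

theorem blkdiag_smul (t : ℝ) (P : ∀ c, Matrix (Fin (n c)) (Fin (r c)) ℝ) :
    blkdiag n r (fun c => t • P c) = t • blkdiag n r P := by
  rw [blkdiag, blkdiag, ← Pi.smul_def, blockDiagonal'_smul, submatrix_smul]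
  rfl

theorem blkdiag_mul_transpose_blkdiag (P Q : ∀ c, Matrix (Fin (n c)) (Fin (r c)) ℝ) :
    blkdiag n r P * (blkdiag n r Q)ᵀ = blkdiag n n fun c => P c * (Q c)ᵀ := by
  rw [blkdiag, blkdiag, blkdiag, transpose_submatrix, blockDiagonal'_transpose,
    submatrix_mul_equiv, blockDiagonal'_mul]

theorem diagonal_comp_chanIdx (d : ∀ c, Fin (n c) → ℝ) :
    diagonal (Sigma.uncurry d ∘ chanIdx n) = blkdiag n n fun c => diagonal (d c) := by
  rw [blkdiag, blockDiagonal'_diagonal, submatrix_diagonal_equiv]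
  rfl

end BlockDiagonal

section FullDifferential

variable {C : ℕ} (n r : Fin C → ℕ) (r0 : ℕ) (A : Matrix (Fin (∑ c, n c)) (Fin r0) ℝ)
  (B : ∀ c, Matrix (Fin (n c)) (Fin (r c)) ℝ)

noncomputable def fdiffₗ :
    (FreeIdx (∑ c, n c) r0 → ℝ) × ((c : Fin C) → FreeIdx (n c) (r c) → ℝ)
      × (Fin (∑ c, n c) → ℝ)
      →ₗ[ℝ] Matrix (Fin (∑ c, n c)) (Fin (∑ c, n c)) ℝ where
  toFun := Fdiff n r r0 A B
  map_add' e f := by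
    have hdiag : diagonal (e.2.2 + f.2.2) = diagonal e.2.2 + diagonal f.2.2 :=
      (diagonal_add _ _).symm
    simp only [Fdiff, Prod.fst_add, Pi.add_apply, Prod.snd_add, toMat_add, blkdiag_add,
      transpose_add, Matrix.mul_add, Matrix.add_mul, hdiag]
    abel
  map_smul' t e := by
    simp only [Fdiff, Prod.smul_fst, Pi.smul_apply, Prod.smul_snd, toMat_smul, blkdiag_smul,
      transpose_smul, Matrix.mul_smul, Matrix.smul_mul, diagonal_smul, smul_add, RingHom.id_apply]

theorem Fdiff_transpose (e) : (Fdiff n r r0 A B e)ᵀ = Fdiff n r r0 A B e := by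
  simp only [Fdiff, transpose_add, transpose_mul, transpose_transpose, diagonal_transpose]
  abel

end FullDifferential

section Channel

variable {C : ℕ} (n r : Fin C → ℕ) (r0 : ℕ) (c : Fin C)

/-- The perturbation `(0, dB, dΦ)` with `dB` and `dΦ` supported on channel `c`. -/
noncomputable def channelIncl (x : (FreeIdx (n c) (r c) → ℝ) × (Fin (n c) → ℝ)) :
    (FreeIdx (∑ c, n c) r0 → ℝ) × ((c : Fin C) → FreeIdx (n c) (r c) → ℝ)
      × (Fin (∑ c, n c) → ℝ) :=
  (0, Pi.single c x.1, Sigma.uncurry (Pi.single c x.2 : ∀ c, Fin (n c) → ℝ) ∘ chanIdx n)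

theorem channelIncl_injective : Function.Injective (channelIncl n r r0 c) := by
  intro x y h
  simp only [channelIncl, Prod.mk.injEq, true_and] at h
  refine Prod.ext (Pi.single_injective c h.1) (funext fun i => ?_)
  have := congrFun h.2 ((chanIdx n).symm ⟨c, i⟩)
  rwa [Function.comp_apply, Function.comp_apply, Equiv.apply_symm_apply, Sigma.uncurry,
    Sigma.uncurry, Pi.single_eq_same, Pi.single_eq_same] at this

theorem Fdiff_channelIncl (A : Matrix (Fin (∑ c, n c)) (Fin r0) ℝ)
    (B : ∀ c, Matrix (Fin (n c)) (Fin (r c)) ℝ) (x) :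
    Fdiff n r r0 A B (channelIncl n r r0 c x)
      = blkdiag n n (Pi.single c (loadingDiff (B c) x)) := by
  simp only [Fdiff, channelIncl, toMat_zero, transpose_zero, Matrix.mul_zero, Matrix.zero_mul,
    zero_add, blkdiag_mul_transpose_blkdiag, diagonal_comp_chanIdx, ← blkdiag_add]
  congr 1
  funext c'
  rcases eq_or_ne c' c with rfl | hc
  · simp [loadingDiff]
  · simp [hc]

theorem loadingDiff_injective_of_injective_Fdiff {A : Matrix (Fin (∑ c, n c)) (Fin r0) ℝ}
    {B : ∀ c, Matrix (Fin (n c)) (Fin (r c)) ℝ} (hF : Function.Injective (Fdiff n r r0 A B)) :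
    Function.Injective (loadingDiff (B c)) := by
  have hcomp : Fdiff n r r0 A B ∘ channelIncl n r r0 c
      = (blkdiag n n ∘ Pi.single c) ∘ loadingDiff (B c) :=
    funext (Fdiff_channelIncl n r r0 c A B)
  exact (hcomp ▸ hF.comp (channelIncl_injective n r r0 c)).of_comp

end Channel

section DimensionCount

variable {C : ℕ} (n r : Fin C → ℕ) (r0 : ℕ)

theorem card_freeIdx_add_Dcount_add_le_of_injective (hrc : ∀ c, r c ≤ n c)
    {A : Matrix (Fin (∑ c, n c)) (Fin r0) ℝ} {B : ∀ c, Matrix (Fin (n c)) (Fin (r c)) ℝ}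
    (hF : Function.Injective (Fdiff n r r0 A B)) :
    (Fintype.card (FreeIdx (∑ c, n c) r0) : ℝ) + Dcount n r + (∑ c, n c : ℕ)
      ≤ Fintype.card (FreeIdx (∑ c, n c) (∑ c, n c)) := by
  have hdim := finrank_le_card_freeIdx_of_injective (fdiffₗ n r r0 A B) hF
    (Fdiff_transpose n r r0 A B)
  simp only [Module.finrank_prod, Module.finrank_pi, Module.finrank_pi_fintype,
    Fintype.card_fin] at hdim
  have hD : Dcount n r = ∑ c, (Fintype.card (FreeIdx (n c) (r c)) : ℝ) :=
    Finset.sum_congr rfl fun c _ => (card_freeIdx_eq (hrc c)).symm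
  rw [hD, add_assoc]
  exact_mod_cast hdim

theorem card_freeIdx_channel_add_le_of_injective (c : Fin C)
    {A : Matrix (Fin (∑ c, n c)) (Fin r0) ℝ} {B : ∀ c, Matrix (Fin (n c)) (Fin (r c)) ℝ}
    (hF : Function.Injective (Fdiff n r r0 A B)) :
    (Fintype.card (FreeIdx (n c) (r c)) : ℝ) + n c ≤ Fintype.card (FreeIdx (n c) (n c)) := by
  have hdim := finrank_le_card_freeIdx_of_injective (loadingDiff (B c))
    (loadingDiff_injective_of_injective_Fdiff n r r0 c hF) (loadingDiff_transpose (B c))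
  simp only [Module.finrank_prod, Module.finrank_fintype_fun_eq_card, Fintype.card_fin] at hdim
  exact_mod_cast hdim

end DimensionCount

/-- **Proposition 5 (necessity of Condition 4).**  If for some `A ∈ 𝔸_L`, `B ∈ 𝔹_L` the linear
map `F_{A,B} : 𝔸_L × 𝔹_L × Diag(n) → Sym(n)` is injective, then Condition 4 holds:
`r₀ ≤ (2n + 1 − √(8(n + D) + 1))/2` and `r_c ≤ (2n_c + 1 − √(8 n_c + 1))/2` for all `c`. -/
theorem condition_four_of_injective_differential {C : ℕ} (n r : Fin C → ℕ) (r0 : ℕ)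
    (hr0 : r0 ≤ ∑ c, n c) (hrc : ∀ c, r c ≤ n c)
    (hinj : ∃ (A : Matrix (Fin (∑ c, n c)) (Fin r0) ℝ)
        (B : ∀ c, Matrix (Fin (n c)) (Fin (r c)) ℝ),
        IsLT hr0 A ∧ (∀ c, IsLT (hrc c) (B c)) ∧
        Function.Injective (Fdiff n r r0 A B)) :
    (r0 : ℝ) ≤ (2 * (∑ c, n c : ℕ) + 1
        - Real.sqrt (8 * (((∑ c, n c : ℕ) : ℝ) + Dcount n r) + 1)) / 2 ∧
    ∀ c, (r c : ℝ) ≤ (2 * (n c : ℝ) + 1 - Real.sqrt (8 * (n c : ℝ) + 1)) / 2 := by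
  obtain ⟨A, B, -, -, hF⟩ := hinj
  refine ⟨?_, fun c => ?_⟩
  · have hcount := card_freeIdx_add_Dcount_add_le_of_injective n r r0 hrc hF
    rw [card_freeIdx_eq hr0, card_freeIdx_eq le_rfl] at hcount
    exact le_half_sub_sqrt_of_dim_le (by exact_mod_cast hr0) hcount
  · have hcount := card_freeIdx_channel_add_le_of_injective n r r0 c hF
    rw [card_freeIdx_eq (hrc c), card_freeIdx_eq le_rfl] at hcount
    simpa using le_half_sub_sqrt_of_dim_le (D := 0) (by exact_mod_cast hrc c) (by linarith)
end

section
/- Let H = [H_1ᵀ H_2ᵀ]ᵀ and Z = [Z_1ᵀ Z_2ᵀ]ᵀ be real m×p matrices with top p×p blocks H_1 and Z_1. If H_1 is invertible, both H_1 and Z_1 are lower triangular, and H·Zᵀ + Z·Hᵀ = 0, then Z = 0. -/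
open Matrix

/-- **Lemma (LT lemma).** Let `H = [H₁ᵀ H₂ᵀ]ᵀ` and `Z = [Z₁ᵀ Z₂ᵀ]ᵀ` be real `m × p` matrices
whose top `p × p` blocks are `H₁` and `Z₁`.  If `H₁` is invertible, `H₁` and `Z₁` are lower
triangular, and `H Zᵀ + Z Hᵀ = 0`, then `Z = 0`. -/
theorem lt_blocks_skew_zero {m p : ℕ} (hp : p ≤ m) (H Z : Matrix (Fin m) (Fin p) ℝ)
    (hH1inv : IsUnit (H.submatrix (Fin.castLE hp) id).det)
    (hH1LT : ∀ i j : Fin p, i < j → H (Fin.castLE hp i) j = 0)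
    (hZ1LT : ∀ i j : Fin p, i < j → Z (Fin.castLE hp i) j = 0)
    (hskew : H * Zᵀ + Z * Hᵀ = 0) :
    Z = 0 := by
  set H1 : Matrix (Fin p) (Fin p) ℝ := H.submatrix (Fin.castLE hp) id with hH1def
  set Z1 : Matrix (Fin p) (Fin p) ℝ := Z.submatrix (Fin.castLE hp) id with hZ1def
  have hH1Tinv : IsUnit (H1ᵀ).det := by rwa [Matrix.det_transpose]
  -- top p×p block equation
  have hA : H1 * Z1ᵀ + Z1 * H1ᵀ = 0 := by
    ext i j
    have := congrFun (congrFun hskew (Fin.castLE hp i)) (Fin.castLE hp j)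
    simpa [Matrix.mul_apply, Matrix.add_apply, hH1def, hZ1def] using this
  -- upper triangularity (BlockTriangular id) of transposes
  have hH1T : (H1ᵀ).BlockTriangular (id : Fin p → Fin p) := by
    intro i j hij
    exact hH1LT j i hij
  have hZ1T : (Z1ᵀ).BlockTriangular (id : Fin p → Fin p) := by
    intro i j hij
    exact hZ1LT j i hij
  haveI : Invertible (H1ᵀ) := Matrix.invertibleOfIsUnitDet _ hH1Tinv
  have hH1Tinv' : (H1ᵀ)⁻¹.BlockTriangular (id : Fin p → Fin p) :=
    blockTriangular_inv_of_blockTriangular hH1T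
  set W : Matrix (Fin p) (Fin p) ℝ := Z1ᵀ * (H1ᵀ)⁻¹ with hWdef
  have hWT : W.BlockTriangular (id : Fin p → Fin p) := hZ1T.mul hH1Tinv'
  -- W + Wᵀ = 0
  have hWskew : W + Wᵀ = 0 := by
    have h1 : Wᵀ = H1⁻¹ * Z1 := by
      rw [hWdef, Matrix.transpose_mul, Matrix.transpose_nonsing_inv]
      simp
    have key : W + Wᵀ = H1⁻¹ * (H1 * Z1ᵀ + Z1 * H1ᵀ) * (H1ᵀ)⁻¹ := by
      rw [h1, hWdef]
      rw [Matrix.mul_add, Matrix.add_mul]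
      congr 1
      · rw [← Matrix.mul_assoc, Matrix.nonsing_inv_mul _ hH1inv, Matrix.one_mul]
      · rw [Matrix.mul_assoc, Matrix.mul_assoc, Matrix.mul_nonsing_inv _ hH1Tinv,
          Matrix.mul_one]
    rw [key, hA, Matrix.mul_zero, Matrix.zero_mul]
  have hW0 : W = 0 := by
    ext i j
    rcases lt_trichotomy i j with hij | hij | hij
    · have := congrFun (congrFun hWskew j) i
      simp only [Matrix.add_apply, Matrix.transpose_apply, Matrix.zero_apply] at this
      have h2 : W j i = 0 := hWT hij
      have : W i j = 0 := by linarith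
      simpa using this
    · subst hij
      have := congrFun (congrFun hWskew i) i
      simp only [Matrix.add_apply, Matrix.transpose_apply, Matrix.zero_apply] at this
      simpa using by linarith
    · simpa using hWT hij
  have hZ1 : Z1 = 0 := by
    have : Z1ᵀ = 0 := by
      have := congrArg (· * H1ᵀ) hW0
      simpa [hWdef, Matrix.mul_assoc, Matrix.nonsing_inv_mul _ hH1Tinv] using this
    calc Z1 = Z1ᵀᵀ := (Matrix.transpose_transpose Z1).symm
    _ = 0 := by rw [this]; simp
  -- now Z * H1ᵀ = 0
  have hZH1 : Z * H1ᵀ = 0 := by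
    ext i j
    have h := congrFun (congrFun hskew i) (Fin.castLE hp j)
    simp only [Matrix.add_apply, Matrix.mul_apply, Matrix.transpose_apply,
      Matrix.zero_apply] at h ⊢
    have hz : ∀ k : Fin p, Z (Fin.castLE hp j) k = 0 := by
      intro k
      have := congrFun (congrFun hZ1 j) k
      simpa [hZ1def] using this
    simp only [hz, mul_zero, Finset.sum_const_zero, zero_add] at h
    simpa [hH1def] using h
  calc Z = Z * (H1ᵀ * (H1ᵀ)⁻¹) := by rw [Matrix.mul_nonsing_inv _ hH1Tinv, Matrix.mul_one]
  _ = 0 := by rw [← Matrix.mul_assoc, hZH1, Matrix.zero_mul]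
end

section
/- Let M ∈ ℝ^{n×m} and let φ ∈ ℝ^{n×n} be invertible. Then n + rank(I_m + Mᵀ·φ⁻¹·M) = m + rank(M·Mᵀ + φ). -/
open Matrix

/-- A product-submodule is linearly equivalent to the product of the submodules. -/
def submoduleProdEquiv {R M N : Type*} [Ring R] [AddCommGroup M] [AddCommGroup N]
    [Module R M] [Module R N] (p : Submodule R M) (q : Submodule R N) :
    (p.prod q) ≃ₗ[R] p × q where
  toFun x := (⟨x.1.1, x.2.1⟩, ⟨x.1.2, x.2.2⟩)
  invFun x := ⟨(x.1.1, x.2.1), x.1.2, x.2.2⟩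
  map_add' _ _ := rfl
  map_smul' _ _ := rfl
  left_inv _ := rfl
  right_inv _ := rfl

/-- Rank of a block-diagonal matrix is the sum of the ranks of the blocks. -/
lemma rank_fromBlocks_diag {n m n' m' : ℕ} (A : Matrix (Fin n) (Fin n') ℝ)
    (D : Matrix (Fin m) (Fin m') ℝ) :
    (fromBlocks A 0 0 D).rank = A.rank + D.rank := by
  classical
  let e := LinearEquiv.sumArrowLequivProdArrow (Fin n) (Fin m) ℝ ℝ
  have hmap : Submodule.map (e : (Fin n ⊕ Fin m → ℝ) →ₗ[ℝ] (Fin n → ℝ) × (Fin m → ℝ)) (LinearMap.range (fromBlocks A 0 0 D).mulVecLin)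
      = (LinearMap.range A.mulVecLin).prod (LinearMap.range D.mulVecLin) := by
    ext ⟨u, v⟩
    simp only [Submodule.mem_map, LinearMap.mem_range, Submodule.mem_prod,
      mulVecLin_apply]
    constructor
    · rintro ⟨w, ⟨x, rfl⟩, h⟩
      rw [← Sum.elim_comp_inl_inr x, fromBlocks_mulVec] at h
      simp [e, LinearEquiv.sumArrowLequivProdArrow, Equiv.sumArrowEquivProdArrow,
        zero_mulVec, Prod.ext_iff] at h
      exact ⟨⟨x ∘ Sum.inl, h.1⟩, ⟨x ∘ Sum.inr, h.2⟩⟩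
    · rintro ⟨⟨a, rfl⟩, ⟨b, rfl⟩⟩
      refine ⟨Sum.elim (A *ᵥ a) (D *ᵥ b), ⟨Sum.elim a b, ?_⟩, ?_⟩
      · rw [fromBlocks_mulVec]
        simp [zero_mulVec]
      · simp [e, LinearEquiv.sumArrowLequivProdArrow, Equiv.sumArrowEquivProdArrow]
  have h1 : (fromBlocks A 0 0 D).rank
      = Module.finrank ℝ ((LinearMap.range A.mulVecLin).prod (LinearMap.range D.mulVecLin)) := by
    rw [Matrix.rank, ← LinearEquiv.finrank_map_eq e, hmap]
  rw [h1, LinearEquiv.finrank_eq (submoduleProdEquiv _ _), Module.finrank_prod]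
  rfl

/-- **Rank identity.** For `M ∈ ℝ^{n×m}` and invertible `φ ∈ ℝ^{n×n}`,
`n + rank(I_m + Mᵀ φ⁻¹ M) = m + rank(M Mᵀ + φ)`. -/
theorem rank_schur_identity {n m : ℕ} (M : Matrix (Fin n) (Fin m) ℝ)
    (φ : Matrix (Fin n) (Fin n) ℝ) (hφ : IsUnit φ.det) :
    n + ((1 : Matrix (Fin m) (Fin m) ℝ) + Mᵀ * φ⁻¹ * M).rank = m + (M * Mᵀ + φ).rank := by
  classical
  set S : Matrix (Fin m) (Fin m) ℝ := 1 + Mᵀ * φ⁻¹ * M with hS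
  set X : Matrix (Fin n ⊕ Fin m) (Fin n ⊕ Fin m) ℝ := fromBlocks φ M Mᵀ (-1) with hX
  have hnegm : IsUnit ((-1 : Matrix (Fin m) (Fin m) ℝ).det) :=
    (Matrix.isUnit_iff_isUnit_det _).mp isUnit_one.neg
  have h1 : fromBlocks (1 : Matrix (Fin n) (Fin n) ℝ) 0 (Mᵀ * φ⁻¹) 1 *
      (fromBlocks φ 0 0 (-S) * fromBlocks 1 (φ⁻¹ * M) 0 1) = X := by
    simp [hX, hS, fromBlocks_multiply, ← Matrix.mul_assoc,
      mul_nonsing_inv _ hφ, nonsing_inv_mul_cancel_right _ _ hφ, neg_add]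
  have h2 : fromBlocks (1 : Matrix (Fin n) (Fin n) ℝ) (-M) 0 1 *
      (fromBlocks (φ + M * Mᵀ) 0 0 (-1) * fromBlocks 1 0 (-Mᵀ) 1) = X := by
    simp [hX, fromBlocks_multiply, add_neg_cancel_right]
  have hLdet : ∀ (B : Matrix (Fin m) (Fin n) ℝ),
      IsUnit (fromBlocks (1 : Matrix (Fin n) (Fin n) ℝ) 0 B 1).det := by
    intro B; simp [det_fromBlocks_zero₁₂]
  have hUdet : ∀ (B : Matrix (Fin n) (Fin m) ℝ),
      IsUnit (fromBlocks (1 : Matrix (Fin n) (Fin n) ℝ) B 0 1).det := by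
    intro B; simp [det_fromBlocks_zero₂₁]
  have r1 : X.rank = n + S.rank := by
    rw [← h1, rank_mul_eq_right_of_isUnit_det _ _ (hLdet _),
      rank_mul_eq_left_of_isUnit_det _ _ (hUdet _), rank_fromBlocks_diag]
    have hφrank : φ.rank = n := by
      rw [rank_of_isUnit φ ((Matrix.isUnit_iff_isUnit_det _).mpr hφ)]; simp
    have hnegS : (-S).rank = S.rank := by
      rw [← neg_one_mul, rank_mul_eq_right_of_isUnit_det _ _ hnegm]
    rw [hφrank, hnegS]
  have r2 : X.rank = (M * Mᵀ + φ).rank + m := by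
    rw [← h2, rank_mul_eq_right_of_isUnit_det _ _ (hUdet _),
      rank_mul_eq_left_of_isUnit_det _ _ (hLdet _), rank_fromBlocks_diag,
      rank_of_isUnit (-1 : Matrix (Fin m) (Fin m) ℝ)
        ((Matrix.isUnit_iff_isUnit_det _).mpr hnegm), add_comm φ (M * Mᵀ)]
    simp
  omega
end

section
/- Let P be a real symmetric positive definite n×n matrix and let L be a real lower-triangular n×n matrix. If P·L + Lᵀ·P = 0, then L = 0. -/
open Matrix

namespace Matrix

variable {ι : Type*} [Fintype ι]

theorem PosDef.eq_zero_of_dotProduct_mulVec_self_eq_zero {P : Matrix ι ι ℝ} (hP : P.PosDef)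
    {v : ι → ℝ} (hv : v ⬝ᵥ P *ᵥ v = 0) : v = 0 := by
  by_contra hne
  simpa [hv] using hP.dotProduct_mulVec_pos hne

theorem transpose_mul_eq_neg_of_mul_add_transpose_mul_eq_zero {α : Type*} [CommRing α]
    {P L : Matrix ι ι α} (hP : P.IsSymm) (h : P * L + Lᵀ * P = 0) :
    (P * L)ᵀ = -(P * L) := by
  rw [transpose_mul, hP.eq, eq_neg_iff_add_eq_zero, add_comm, h]

variable [LinearOrder ι]

/-- The `j`-th column `v` of `L` satisfies `vᵀ P v = ∑ᵢ L i j (P L) i j`; the terms with `i < j`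
vanish by triangularity, the one with `i = j` because `P L` is skew, and those with `j < i` because
`(P L) i j = -(P L) j i` only involves the (zero) `i`-th column of `L`. -/
theorem PosDef.transpose_apply_eq_zero_of_mul_skew {P L : Matrix ι ι ℝ} (hP : P.PosDef)
    (hL : L.BlockTriangular OrderDual.toDual) (hskew : (P * L)ᵀ = -(P * L)) {j : ι}
    (hlater : ∀ k, j < k → Lᵀ k = 0) : Lᵀ j = 0 := by
  refine hP.eq_zero_of_dotProduct_mulVec_self_eq_zero (Finset.sum_eq_zero fun i _ => ?_)
  change L i j * (P * L) i j = 0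
  rcases lt_trichotomy i j with hij | rfl | hji
  · rw [hL hij, zero_mul]
  · have hdiag : (P * L) i i = -(P * L) i i := congr_fun₂ hskew i i
    rw [self_eq_neg.mp hdiag, mul_zero]
  · have hji_zero : (P * L) j i = 0 := by
      change P j ⬝ᵥ Lᵀ i = 0
      rw [hlater i hji, dotProduct_zero]
    have hij_neg : (P * L) i j = -(P * L) j i := congr_fun₂ hskew j i
    rw [hij_neg, hji_zero, neg_zero, mul_zero]

theorem PosDef.eq_zero_of_mul_skew {P L : Matrix ι ι ℝ} (hP : P.PosDef)
    (hL : L.BlockTriangular OrderDual.toDual) (hskew : (P * L)ᵀ = -(P * L)) : L = 0 := by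
  have hcols : ∀ j, Lᵀ j = 0 := fun j => by
    induction j using WellFoundedGT.induction with
    | _ j ih => exact hP.transpose_apply_eq_zero_of_mul_skew hL hskew ih
  exact transpose_eq_zero.mp (funext hcols)

end Matrix

/-- If `P` is symmetric positive definite, `L` is lower triangular and `P L + Lᵀ P = 0`,
then `L = 0`. -/
theorem posdef_lowerTriangular_skew_zero {n : ℕ} (P L : Matrix (Fin n) (Fin n) ℝ)
    (hP : P.PosDef) (hL : ∀ i j : Fin n, i < j → L i j = 0)
    (h : P * L + Lᵀ * P = 0) :
    L = 0 :=
  hP.eq_zero_of_mul_skew (fun _ _ hij => hL _ _ hij)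
    (transpose_mul_eq_neg_of_mul_add_transpose_mul_eq_zero
      (isHermitian_iff_isSymm.mp hP.isHermitian) h)
end
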